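/- Let (φₙ)_{n ≥ 1} be any family of order-n grid enumerations such that for every n: (i) any two consecutive cells φₙ(j), φₙ(j+1) are king-adjacent; and (ii) for all j < 4^{n+1}, integer division of both coordinates of φ_{n+1}(j) by 2 yields φₙ(⌊j/4⌋) (nesting condition). Then there exists a continuous map f : [0,1] → ℝ² such that for every n and every j < 4^n, f maps the subinterval [j/4^n, (j+1)/4^n] into the subsquare S(n, φₙ(j)), and f is surjective onto the unit square [0,1] × [0,1]. In particular, every nested king-adjacent family (including all HHC and HHCK families) induces a space-filling curve. -/

import Mathlib

/-- An order-`n` grid enumeration: a bijection between `Fin (4^n)` and the cells of the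
`2^n × 2^n` grid; cell `(a,b)` represents the subsquare with lower-left corner
`(a/2^n, b/2^n)`. -/
abbrev GridEnum (n : ℕ) := Fin (4 ^ n) ≃ Fin (2 ^ n) × Fin (2 ^ n)

/-- Two grid cells are edge-adjacent if their coordinates (as integers) satisfy
`|a − a'| + |b − b'| = 1`. -/
def edgeAdj {m : ℕ} (c d : Fin m × Fin m) : Prop :=
  |((c.1 : ℕ) : ℤ) - ((d.1 : ℕ) : ℤ)| + |((c.2 : ℕ) : ℤ) - ((d.2 : ℕ) : ℤ)| = 1

/-- Two grid cells are king-adjacent if their coordinates (as integers) satisfy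
`max (|a − a'|) (|b − b'|) = 1`. -/
def kingAdj {m : ℕ} (c d : Fin m × Fin m) : Prop :=
  max |((c.1 : ℕ) : ℤ) - ((d.1 : ℕ) : ℤ)| |((c.2 : ℕ) : ℤ) - ((d.2 : ℕ) : ℤ)| = 1

/-- Adjacency condition: any two consecutive cells of the enumeration are edge-adjacent. -/
def ConsecEdgeAdj {n : ℕ} (φ : GridEnum n) : Prop :=
  ∀ (j : ℕ) (h : j + 1 < 4 ^ n), edgeAdj (φ ⟨j, Nat.lt_of_succ_lt h⟩) (φ ⟨j + 1, h⟩)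

/-- Any two consecutive cells of the enumeration are king-adjacent. -/
def ConsecKingAdj {n : ℕ} (φ : GridEnum n) : Prop :=
  ∀ (j : ℕ) (h : j + 1 < 4 ^ n), kingAdj (φ ⟨j, Nat.lt_of_succ_lt h⟩) (φ ⟨j + 1, h⟩)

/-- Endpoint condition: the enumeration starts at the lower-left cell `(0,0)` and ends
at the lower-right cell `(2^n − 1, 0)`. -/
def EndpointCond {n : ℕ} (φ : GridEnum n) : Prop :=
  φ ⟨0, by positivity⟩ = (⟨0, by positivity⟩, ⟨0, by positivity⟩) ∧
  φ ⟨4 ^ n - 1, Nat.sub_lt (by positivity) Nat.one_pos⟩ =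
    (⟨2 ^ n - 1, Nat.sub_lt (by positivity) Nat.one_pos⟩, ⟨0, by positivity⟩)

/-- Nesting condition: integer division of both coordinates of `φₙ₊₁ j` by 2 yields
`φₙ ⌊j/4⌋`. -/
def Nests {n : ℕ} (φn : GridEnum n) (φn1 : GridEnum (n + 1)) : Prop :=
  ∀ j : Fin (4 ^ (n + 1)),
    ((φn1 j).1 : ℕ) / 2 =
      ((φn ⟨(j : ℕ) / 4, by
        have hj : (j : ℕ) < 4 ^ n * 4 := by simpa [pow_succ] using j.isLt
        omega⟩).1 : ℕ) ∧
    ((φn1 j).2 : ℕ) / 2 =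
      ((φn ⟨(j : ℕ) / 4, by
        have hj : (j : ℕ) < 4 ^ n * 4 := by simpa [pow_succ] using j.isLt
        omega⟩).2 : ℕ)

/-- The unit square `[0,1] × [0,1]` in the plane `ℝ²`. -/
def unitSquare : Set (ℝ × ℝ) := Set.Icc (0 : ℝ) 1 ×ˢ Set.Icc (0 : ℝ) 1

/-- The subsquare `[a/2^n, (a+1)/2^n] × [b/2^n, (b+1)/2^n]` associated to the grid
cell `(a,b)` at order `n`. -/
noncomputable def subSquare (n : ℕ) (c : Fin (2 ^ n) × Fin (2 ^ n)) : Set (ℝ × ℝ) :=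
  Set.Icc (((c.1 : ℕ) : ℝ) / 2 ^ n) ((((c.1 : ℕ) : ℝ) + 1) / 2 ^ n) ×ˢ
    Set.Icc (((c.2 : ℕ) : ℝ) / 2 ^ n) ((((c.2 : ℕ) : ℝ) + 1) / 2 ^ n)

/-!
The point `f t` is the unique point of the nested squares `S(n, φₙ(jₙ(t)))`, where
`[jₙ(t)/4ⁿ, (jₙ(t)+1)/4ⁿ]` is the level-`n` subinterval containing `t`. Times within `4⁻ⁿ` of
each other lie in the same or in consecutive level-`n` subintervals, so their images lie in
equal or king-adjacent squares of side `2⁻ⁿ` and are at distance at most `2 · 2⁻ⁿ`: `f` is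
uniformly continuous. Each left endpoint `j/4ⁿ` is mapped into `S(n, φₙ(j))` and every square
of the grid is visited, so the compact image of `[0,1]` is dense in, hence equal to, the unit
square.
-/

open Set Filter Topology

/-- Clamping sends `t = 1` to the last index `m - 1` rather than to `m`. -/
noncomputable def clampedFloor (m : ℕ) (t : ℝ) : ℕ := min ⌊t * m⌋₊ (m - 1)

section clampedFloor

variable {m : ℕ} {t t' : ℝ}

lemma clampedFloor_lt (hm : 0 < m) (t : ℝ) : clampedFloor m t < m :=
  (min_le_right _ _).trans_lt (Nat.sub_lt hm one_pos)

lemma clampedFloor_mono (h : t ≤ t') : clampedFloor m t ≤ clampedFloor m t' :=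
  min_le_min_right _ (Nat.floor_le_floor (by gcongr))

lemma clampedFloor_le_add_one (h : t' ≤ t + (m : ℝ)⁻¹) :
    clampedFloor m t' ≤ clampedFloor m t + 1 := by
  rcases Nat.eq_zero_or_pos m with rfl | hm
  · simp [clampedFloor]
  have hmul : t' * m ≤ t * m + 1 := by
    have := mul_le_mul_of_nonneg_right h (Nat.cast_nonneg m)
    rwa [add_mul, inv_mul_cancel₀ (by positivity)] at this
  have hfloor : ⌊t' * m⌋₊ ≤ ⌊t * m⌋₊ + 1 := by
    rcases le_or_gt 0 (t * m) with hpos | hneg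
    · exact (Nat.floor_le_floor hmul).trans (Nat.floor_add_one hpos).le
    · simp [Nat.floor_eq_zero.2 (by linarith : t' * m < 1)]
  unfold clampedFloor
  omega

lemma clampedFloor_mul_div (m : ℕ) {k : ℕ} (hk : 0 < k) (t : ℝ) :
    clampedFloor (m * k) t / k = clampedFloor m t := by
  have hfloor : ⌊t * ↑(m * k)⌋₊ / k = ⌊t * m⌋₊ := by
    rw [← Nat.floor_div_natCast, Nat.cast_mul, ← mul_assoc, mul_div_assoc,
      div_self (by positivity), mul_one]
  have hlast : (m * k - 1) / k = m - 1 := by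
    rcases m with _ | m
    · simp
    · rw [add_tsub_cancel_right, add_mul, one_mul]
      exact Nat.div_eq_of_lt_le (by omega) (by rw [add_mul, one_mul]; omega)
  rw [clampedFloor, clampedFloor, ← hfloor, ← hlast]
  exact Monotone.map_min fun _ _ h => Nat.div_le_div_right h

lemma clampedFloor_eq_of_mem_Ico {j : ℕ} (hj : j < m)
    (ht : t ∈ Ico ((j : ℝ) / m) ((j + 1) / m)) : clampedFloor m t = j := by
  have hm : (0 : ℝ) < m := by exact_mod_cast (Nat.zero_le j).trans_lt hj
  rw [mem_Ico, div_le_iff₀ hm, lt_div_iff₀ hm] at ht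
  have hfloor : ⌊t * m⌋₊ = j := (Nat.floor_eq_iff ((Nat.cast_nonneg j).trans ht.1)).2 ht
  rw [clampedFloor, hfloor]
  omega

lemma mem_Icc_clampedFloor (hm : 0 < m) (ht : t ∈ Icc (0 : ℝ) 1) :
    t ∈ Icc ((clampedFloor m t : ℝ) / m) ((clampedFloor m t + 1) / m) := by
  have hm' : (0 : ℝ) < m := by exact_mod_cast hm
  have htm : 0 ≤ t * m := mul_nonneg ht.1 hm'.le
  rw [mem_Icc, div_le_iff₀ hm', le_div_iff₀ hm']
  refine ⟨(Nat.cast_le.2 (min_le_left _ _)).trans (Nat.floor_le htm), ?_⟩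
  rcases le_total ⌊t * m⌋₊ (m - 1) with h | h
  · rw [clampedFloor, min_eq_left h]
    exact (Nat.lt_floor_add_one _).le
  · rw [clampedFloor, min_eq_right h, Nat.cast_sub hm, Nat.cast_one, sub_add_cancel]
    exact mul_le_of_le_one_left hm'.le ht.2

end clampedFloor

section Intervals

variable {a b m : ℝ} {x y : ℝ}

lemma abs_sub_le_of_mem_Icc_div (hm : 0 < m) (hab : |a - b| ≤ 1)
    (hx : x ∈ Icc (a / m) ((a + 1) / m)) (hy : y ∈ Icc (b / m) ((b + 1) / m)) :
    |x - y| ≤ 2 / m := by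
  rw [abs_le] at hab
  rw [mem_Icc, div_le_iff₀ hm, le_div_iff₀ hm] at hx hy
  rw [abs_sub_le_iff, le_div_iff₀ hm, le_div_iff₀ hm]
  constructor <;> nlinarith

lemma Icc_div_subset_unitInterval (hm : 0 < m) (ha : 0 ≤ a) (h : a + 1 ≤ m) :
    Icc (a / m) ((a + 1) / m) ⊆ Icc 0 1 :=
  Icc_subset_Icc (by positivity) ((div_le_one hm).2 h)

lemma Icc_div_mul_subset {i j k : ℕ} (hm : 0 < m) (hk : 0 < k) (h : i / k = j) :
    Icc ((i : ℝ) / (m * k)) ((i + 1) / (m * k)) ⊆ Icc ((j : ℝ) / m) ((j + 1) / m) := by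
  have hk' : (0 : ℝ) < k := by exact_mod_cast hk
  have hlo : (j : ℝ) * k ≤ i := by exact_mod_cast h ▸ Nat.div_mul_le_self i k
  have hhi : (i : ℝ) + 1 ≤ (j + 1) * k := by
    have : i + 1 ≤ (j + 1) * k := by rw [add_mul, one_mul]; exact h ▸ Nat.lt_div_mul_add hk
    exact_mod_cast this
  apply Icc_subset_Icc
  · rw [div_le_div_iff₀ hm (by positivity)]; nlinarith
  · rw [div_le_div_iff₀ (by positivity) hm]; nlinarith

end Intervals

section subSquare

variable {n : ℕ}

lemma isCompact_subSquare (n : ℕ) (c : Fin (2 ^ n) × Fin (2 ^ n)) :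
    IsCompact (subSquare n c) :=
  isCompact_Icc.prod isCompact_Icc

lemma subSquare_nonempty (n : ℕ) (c : Fin (2 ^ n) × Fin (2 ^ n)) :
    (subSquare n c).Nonempty :=
  (nonempty_Icc.2 (by gcongr; linarith)).prod (nonempty_Icc.2 (by gcongr; linarith))

lemma subSquare_subset_unitSquare (n : ℕ) (c : Fin (2 ^ n) × Fin (2 ^ n)) :
    subSquare n c ⊆ unitSquare := by
  have hcell : ∀ a : Fin (2 ^ n), ((a : ℕ) : ℝ) + 1 ≤ 2 ^ n := fun a => by
    exact_mod_cast a.isLt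
  exact prod_mono (Icc_div_subset_unitInterval (by positivity) (by positivity) (hcell _))
    (Icc_div_subset_unitInterval (by positivity) (by positivity) (hcell _))

lemma subSquare_succ_subset {c : Fin (2 ^ (n + 1)) × Fin (2 ^ (n + 1))}
    {d : Fin (2 ^ n) × Fin (2 ^ n)} (h₁ : (c.1 : ℕ) / 2 = d.1) (h₂ : (c.2 : ℕ) / 2 = d.2) :
    subSquare (n + 1) c ⊆ subSquare n d := by
  have hpow : (2 : ℝ) ^ (n + 1) = 2 ^ n * (2 : ℕ) := by push_cast; ring
  rw [subSquare, subSquare, hpow]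
  exact prod_mono (Icc_div_mul_subset (by positivity) two_pos h₁)
    (Icc_div_mul_subset (by positivity) two_pos h₂)

lemma exists_mem_subSquare (n : ℕ) {q : ℝ × ℝ} (hq : q ∈ unitSquare) :
    ∃ c, q ∈ subSquare n c := by
  have hpos : 0 < 2 ^ n := by positivity
  refine ⟨(⟨clampedFloor (2 ^ n) q.1, clampedFloor_lt hpos _⟩,
    ⟨clampedFloor (2 ^ n) q.2, clampedFloor_lt hpos _⟩), ?_⟩
  have h₁ := mem_Icc_clampedFloor hpos hq.1
  have h₂ := mem_Icc_clampedFloor hpos hq.2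
  push_cast at h₁ h₂
  exact ⟨h₁, h₂⟩

lemma dist_le_of_mem_subSquare {c d : Fin (2 ^ n) × Fin (2 ^ n)} (hcd : c = d ∨ kingAdj c d)
    {p q : ℝ × ℝ} (hp : p ∈ subSquare n c) (hq : q ∈ subSquare n d) :
    dist p q ≤ 2 / 2 ^ n := by
  have hcoord : |((c.1 : ℕ) : ℤ) - (d.1 : ℕ)| ≤ 1 ∧ |((c.2 : ℕ) : ℤ) - (d.2 : ℕ)| ≤ 1 := by
    rcases hcd with rfl | hadj
    · simp
    · exact max_le_iff.1 hadj.le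
  have h₁ : |((c.1 : ℕ) : ℝ) - (d.1 : ℕ)| ≤ 1 := by exact_mod_cast hcoord.1
  have h₂ : |((c.2 : ℕ) : ℝ) - (d.2 : ℕ)| ≤ 1 := by exact_mod_cast hcoord.2
  rw [Prod.dist_eq, Real.dist_eq, Real.dist_eq, max_le_iff]
  exact ⟨abs_sub_le_of_mem_Icc_div (by positivity) h₁ hp.1 hq.1,
    abs_sub_le_of_mem_Icc_div (by positivity) h₂ hp.2 hq.2⟩

end subSquare

lemma tendsto_two_div_two_pow : Tendsto (fun n : ℕ => (2 : ℝ) / 2 ^ n) atTop (𝓝 0) :=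
  (tendsto_pow_atTop_atTop_of_one_lt one_lt_two).const_div_atTop 2

lemma nests_zero (φ₀ : GridEnum 0) (φ₁ : GridEnum 1) : Nests φ₀ φ₁ := by
  intro j
  have := (φ₁ j).1.isLt; have := (φ₁ j).2.isLt
  have := (φ₀ ⟨j / 4, by omega⟩).1.isLt; have := (φ₀ ⟨j / 4, by omega⟩).2.isLt
  simp only [pow_zero, pow_one] at *
  omega

lemma consecKingAdj_zero (φ₀ : GridEnum 0) : ConsecKingAdj φ₀ :=
  fun j h => absurd h (by simp)

section Curve

variable {φ : ∀ n : ℕ, GridEnum n} {n : ℕ}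

noncomputable def cellAt (φ : ∀ n : ℕ, GridEnum n) (n : ℕ) (t : ℝ) : Fin (2 ^ n) × Fin (2 ^ n) :=
  φ n ⟨clampedFloor (4 ^ n) t, clampedFloor_lt (by positivity) t⟩

lemma subSquare_cellAt_succ_subset (hnest : Nests (φ n) (φ (n + 1))) (t : ℝ) :
    subSquare (n + 1) (cellAt φ (n + 1) t) ⊆ subSquare n (cellAt φ n t) := by
  obtain ⟨h₁, h₂⟩ := hnest ⟨clampedFloor (4 ^ (n + 1)) t, clampedFloor_lt (by positivity) t⟩
  have hidx : clampedFloor (4 ^ (n + 1)) t / 4 = clampedFloor (4 ^ n) t :=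
    pow_succ 4 n ▸ clampedFloor_mul_div _ four_pos t
  simp only [hidx] at h₁ h₂
  exact subSquare_succ_subset h₁ h₂

lemma cellAt_eq_or_kingAdj (hadj : ConsecKingAdj (φ n)) {s u : ℝ} (hsu : s ≤ u)
    (hus : u ≤ s + ((4 : ℝ) ^ n)⁻¹) :
    cellAt φ n s = cellAt φ n u ∨ kingAdj (cellAt φ n s) (cellAt φ n u) := by
  have hle : clampedFloor (4 ^ n) s ≤ clampedFloor (4 ^ n) u := clampedFloor_mono hsu
  have hle' : clampedFloor (4 ^ n) u ≤ clampedFloor (4 ^ n) s + 1 :=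
    clampedFloor_le_add_one (by push_cast; exact hus)
  rcases hle.eq_or_lt with heq | hlt
  · exact Or.inl (by simp only [cellAt, heq])
  · have hsucc : clampedFloor (4 ^ n) u = clampedFloor (4 ^ n) s + 1 := by omega
    have hlt' := clampedFloor_lt (m := 4 ^ n) (by positivity) u
    rw [hsucc] at hlt'
    right
    simpa only [cellAt, hsucc] using hadj _ hlt'

lemma cellAt_of_mem_Ico (j : Fin (4 ^ n)) {t : ℝ}
    (ht : t ∈ Ico (((j : ℕ) : ℝ) / 4 ^ n) ((((j : ℕ) : ℝ) + 1) / 4 ^ n)) :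
    cellAt φ n t = φ n j := by
  have hidx : clampedFloor (4 ^ n) t = j :=
    clampedFloor_eq_of_mem_Ico j.isLt (by push_cast; exact ht)
  simp only [cellAt, hidx]

lemma exists_forall_mem_subSquare_cellAt (hnest : ∀ n, Nests (φ n) (φ (n + 1))) (t : ℝ) :
    ∃ p, ∀ n, p ∈ subSquare n (cellAt φ n t) := by
  simpa only [Set.Nonempty, mem_iInter] using
    IsCompact.nonempty_iInter_of_sequence_nonempty_isCompact_isClosed
      (fun n => subSquare n (cellAt φ n t)) (fun n => subSquare_cellAt_succ_subset (hnest n) t)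
      (fun n => subSquare_nonempty n _) (isCompact_subSquare 0 _)
      (fun n => (isCompact_subSquare n _).isClosed)

noncomputable def limitCurve (φ : ∀ n : ℕ, GridEnum n) (t : ℝ) : ℝ × ℝ :=
  Classical.epsilon fun p => ∀ n, p ∈ subSquare n (cellAt φ n t)

lemma limitCurve_mem_subSquare (hnest : ∀ n, Nests (φ n) (φ (n + 1))) (n : ℕ) (t : ℝ) :
    limitCurve φ t ∈ subSquare n (cellAt φ n t) :=
  Classical.epsilon_spec (exists_forall_mem_subSquare_cellAt hnest t) n

lemma dist_limitCurve_le (hnest : ∀ n, Nests (φ n) (φ (n + 1)))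
    (hadj : ConsecKingAdj (φ n)) {s u : ℝ} (hsu : s ≤ u)
    (hus : u ≤ s + ((4 : ℝ) ^ n)⁻¹) : dist (limitCurve φ s) (limitCurve φ u) ≤ 2 / 2 ^ n :=
  dist_le_of_mem_subSquare (cellAt_eq_or_kingAdj hadj hsu hus)
    (limitCurve_mem_subSquare hnest n s) (limitCurve_mem_subSquare hnest n u)

lemma uniformContinuous_limitCurve (hnest : ∀ n, Nests (φ n) (φ (n + 1)))
    (hadj : ∀ n, ConsecKingAdj (φ n)) : UniformContinuous (limitCurve φ) := by
  rw [Metric.uniformContinuous_iff]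
  intro ε hε
  obtain ⟨n, hn⟩ := (tendsto_two_div_two_pow.eventually (gt_mem_nhds hε)).exists
  refine ⟨((4 : ℝ) ^ n)⁻¹, by positivity, fun {s u} hsu => ?_⟩
  rw [Real.dist_eq, abs_lt] at hsu
  rcases le_total s u with h | h
  · exact (dist_limitCurve_le hnest (hadj n) h (by linarith)).trans_lt hn
  · rw [dist_comm]
    exact (dist_limitCurve_le hnest (hadj n) h (by linarith)).trans_lt hn

lemma mapsTo_limitCurve (hnest : ∀ n, Nests (φ n) (φ (n + 1)))
    (hadj : ∀ n, ConsecKingAdj (φ n)) (n : ℕ) (j : Fin (4 ^ n)) :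
    MapsTo (limitCurve φ) (Icc (((j : ℕ) : ℝ) / 4 ^ n) ((((j : ℕ) : ℝ) + 1) / 4 ^ n))
      (subSquare n (φ n j)) := by
  have hIco : MapsTo (limitCurve φ) (Ico (((j : ℕ) : ℝ) / 4 ^ n) ((((j : ℕ) : ℝ) + 1) / 4 ^ n))
      (subSquare n (φ n j)) := fun t ht =>
    cellAt_of_mem_Ico j ht ▸ limitCurve_mem_subSquare hnest n t
  have hne : ((j : ℕ) : ℝ) / 4 ^ n ≠ (((j : ℕ) : ℝ) + 1) / 4 ^ n := by
    rw [Ne, div_left_inj' (by positivity)]; simp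
  simpa only [closure_Ico hne, (isCompact_subSquare n _).isClosed.closure_eq] using
    hIco.closure (uniformContinuous_limitCurve hnest hadj).continuous

lemma exists_dist_limitCurve_le (hnest : ∀ n, Nests (φ n) (φ (n + 1)))
    (hadj : ∀ n, ConsecKingAdj (φ n)) {q : ℝ × ℝ} (hq : q ∈ unitSquare) (n : ℕ) :
    ∃ t ∈ Icc (0 : ℝ) 1, dist q (limitCurve φ t) ≤ 2 / 2 ^ n := by
  obtain ⟨c, hc⟩ := exists_mem_subSquare n hq
  set j := (φ n).symm c
  have h4 : (0 : ℝ) < 4 ^ n := by positivity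
  have hj : ((j : ℕ) : ℝ) + 1 ≤ 4 ^ n := by exact_mod_cast j.isLt
  refine ⟨((j : ℕ) : ℝ) / 4 ^ n, ⟨by positivity, (div_le_one h4).2 (by linarith)⟩, ?_⟩
  have hmem := mapsTo_limitCurve hnest hadj n j
    ⟨le_rfl, div_le_div_of_nonneg_right (by linarith) h4.le⟩
  rw [Equiv.apply_symm_apply] at hmem
  exact dist_le_of_mem_subSquare (Or.inl rfl) hc hmem

lemma limitCurve_image_Icc (hnest : ∀ n, Nests (φ n) (φ (n + 1)))
    (hadj : ∀ n, ConsecKingAdj (φ n)) : limitCurve φ '' Icc 0 1 = unitSquare := by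
  refine Subset.antisymm ?_ fun q hq => ?_
  · rintro _ ⟨t, -, rfl⟩
    exact subSquare_subset_unitSquare 0 _ (limitCurve_mem_subSquare hnest 0 t)
  have hclosed : IsClosed (limitCurve φ '' Icc 0 1) :=
    (isCompact_Icc.image (uniformContinuous_limitCurve hnest hadj).continuous).isClosed
  rw [← hclosed.closure_eq, Metric.mem_closure_iff]
  intro ε hε
  obtain ⟨n, hn⟩ := (tendsto_two_div_two_pow.eventually (gt_mem_nhds hε)).exists
  obtain ⟨t, ht, hdist⟩ := exists_dist_limitCurve_le hnest hadj hq n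
  exact ⟨_, mem_image_of_mem _ ht, hdist.trans_lt hn⟩

end Curve

/-- Every nested king-adjacent family of grid enumerations (in particular every HHC and
HHCK family) induces a space-filling curve: a continuous map on `[0,1]` carrying each
subinterval `[j/4^n, (j+1)/4^n]` into the subsquare `S(n, φₙ j)` and surjective onto
the unit square. -/
theorem nested_family_induces_space_filling_curve
    (φ : ∀ n : ℕ, GridEnum n)
    (hadj : ∀ n : ℕ, 1 ≤ n → ConsecKingAdj (φ n))
    (hnest : ∀ n : ℕ, 1 ≤ n → Nests (φ n) (φ (n + 1))) :
    ∃ f : ℝ → ℝ × ℝ, ContinuousOn f (Set.Icc 0 1) ∧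
      (∀ n : ℕ, 1 ≤ n → ∀ j : Fin (4 ^ n),
        Set.MapsTo f (Set.Icc (((j : ℕ) : ℝ) / 4 ^ n) ((((j : ℕ) : ℝ) + 1) / 4 ^ n))
          (subSquare n (φ n j))) ∧
      f '' Set.Icc 0 1 = unitSquare := by
  have hnest' : ∀ n, Nests (φ n) (φ (n + 1))
    | 0 => nests_zero _ _
    | n + 1 => hnest (n + 1) n.succ_pos
  have hadj' : ∀ n, ConsecKingAdj (φ n)
    | 0 => consecKingAdj_zero _
    | n + 1 => hadj (n + 1) n.succ_pos
  exact ⟨limitCurve φ, (uniformContinuous_limitCurve hnest' hadj').continuous.continuousOn,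
    fun n _ => mapsTo_limitCurve hnest' hadj' n, limitCurve_image_Icc hnest' hadj'⟩
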